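/- Let Γ be a finite connected simple graph and e a cycle-edge of Γ. Let Γ' be Γ with e deleted and Γ'' be Γ with e contracted. Then the number of click-equivalence classes of acyclic orientations satisfies κ(Γ) = κ(Γ') + κ(Γ''). -/

import Mathlib

variable {V : Type*}

/-- An acyclic orientation of a simple graph `G`. -/
structure AcyclicOrientation (G : SimpleGraph V) where
  dir : V → V → Prop
  dir_adj : ∀ {a b : V}, dir a b → G.Adj a b
  total : ∀ {a b : V}, G.Adj a b → dir a b ∨ dir b a
  acyclic : ∀ a : V, ¬ Relation.TransGen dir a a

namespace AcyclicOrientation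

variable {G : SimpleGraph V}

/-- `v` is a source: no edge points into `v`. -/
def IsSource (O : AcyclicOrientation G) (v : V) : Prop := ∀ a, ¬ O.dir a v

/-- `O'` is obtained from `O` by converting the source `v` into a sink. -/
def ClickAt (O : AcyclicOrientation G) (v : V) (O' : AcyclicOrientation G) : Prop :=
  O.IsSource v ∧ ∀ a b, (O'.dir a b ↔ (((a = v ∨ b = v) ∧ O.dir b a) ∨ (a ≠ v ∧ b ≠ v ∧ O.dir a b)))

/-- One source-to-sink conversion relates `O` and `O'`. -/
def IsClick (O O' : AcyclicOrientation G) : Prop := ∃ v, O.ClickAt v O'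

/-- Click-equivalence: reachability by a finite sequence of clicks. -/
def ClickEquiv (O O' : AcyclicOrientation G) : Prop :=
  Relation.ReflTransGen IsClick O O'

/-- `ClickSeq O c O'` : the list `c` is a click-sequence applicable to `O` with result `O'`. -/
inductive ClickSeq : AcyclicOrientation G → List V → AcyclicOrientation G → Prop
  | nil (O : AcyclicOrientation G) : ClickSeq O [] O
  | cons {O O' O'' : AcyclicOrientation G} {v : V} {c : List V} :
      O.ClickAt v O' → ClickSeq O' c O'' → ClickSeq O (v :: c) O''

open scoped Classical in
/-- `ν_P(O)`: forward minus backward edges of the closed walk `p` under `O`. -/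
noncomputable def nu (O : AcyclicOrientation G) {u : V} (p : G.Walk u u) : ℤ :=
  (p.darts.map (fun d => if O.dir d.toProd.1 d.toProd.2 then (1 : ℤ) else -1)).sum

/-- The `vw`-interval: vertices on a directed path from `v` to `w`. -/
def interval (O : AcyclicOrientation G) (v w : V) : Set V :=
  {a | Relation.ReflTransGen O.dir v a ∧ Relation.ReflTransGen O.dir a w}

end AcyclicOrientation

open AcyclicOrientation

/-- The setoid of click-equivalence (equivalence relation generated by clicks). -/
def clickSetoid (G : SimpleGraph V) : Setoid (AcyclicOrientation G) :=
  ⟨Relation.EqvGen IsClick, Relation.EqvGen.is_equivalence _⟩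

/-- `κ(G)`: the number of click-equivalence classes of acyclic orientations. -/
noncomputable def kappa (G : SimpleGraph V) : ℕ :=
  Nat.card (Quotient (clickSetoid G))

/-- The graph obtained from `G` by contracting the vertex set `I` to the single vertex `vI ∈ I`
(vertices of `I` other than `vI` become isolated). -/
def contractGraph (G : SimpleGraph V) (I : Set V) (vI : V) : SimpleGraph V where
  Adj a b := a ≠ b ∧
    ((a ∉ I ∧ b ∉ I ∧ G.Adj a b) ∨
     (a = vI ∧ b ∉ I ∧ ∃ x ∈ I, G.Adj x b) ∨
     (b = vI ∧ a ∉ I ∧ ∃ x ∈ I, G.Adj x a))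
  symm := by
    refine ⟨?_⟩
    rintro a b ⟨hne, h⟩
    refine ⟨hne.symm, ?_⟩
    rcases h with ⟨ha, hb, hadj⟩ | ⟨ha, hb, x, hx, hadj⟩ | ⟨hb, ha, x, hx, hadj⟩
    · exact Or.inl ⟨hb, ha, hadj.symm⟩
    · exact Or.inr (Or.inr ⟨ha, hb, x, hx, hadj⟩)
    · exact Or.inr (Or.inl ⟨hb, ha, x, hx, hadj⟩)
  loopless := ⟨by rintro a ⟨hne, -⟩; exact hne rfl⟩

/-- The orientation of the contracted graph induced by an orientation `O` of `G`. -/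
def contractDir {G : SimpleGraph V} (O : AcyclicOrientation G) (I : Set V) (vI : V) :
    V → V → Prop := fun a b =>
  (a ∉ I ∧ b ∉ I ∧ O.dir a b) ∨
  (a = vI ∧ b ∉ I ∧ ∃ x ∈ I, O.dir x b) ∨
  (b = vI ∧ a ∉ I ∧ ∃ x ∈ I, O.dir a x)

/-- The orientation `i → j` iff `i` precedes `j` in the list `l`. -/
def permDir (G : SimpleGraph V) [DecidableEq V] (l : List V) : V → V → Prop :=
  fun i j => G.Adj i j ∧ l.idxOf i < l.idxOf j

/-!
Fix the root `v`, and call an acyclic orientation rooted at `v` if every source other than `v`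
is isolated. Encode an orientation by the signs `±1` it gives to ordered edges. A click at `u`
changes these signs by the coboundary of `2 • 𝟙ᵤ`, so click-equivalent orientations differ by
the coboundary of a potential `h : V → ℤ`, unique up to a constant when every non-isolated
vertex is reachable from `v`. If both orientations are rooted at `v`, then `h` and `-h` both
attain their maximum over the non-isolated vertices at `v` (a maximiser that is minimal for the
orientation is a source), so `h` is constant there and the orientations coincide. Conversely, a
member of a click class of maximal total potential has no non-isolated source `u ≠ v`, since
clicking `u` would raise the total by 2. Hence `κ(Γ)` counts the orientations rooted at `v`.

An orientation of `Γ` rooted at `v` orients `e = vw` as `v → w`. Deleting `e` leaves it rooted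
at `v` in `Γ'` unless `w` becomes a source, and every orientation of `Γ'` rooted at `v` extends
back by `v → w`. If `w` does become a source, then `v` and `w` are both sources, so no directed
path joins them and the orientation descends to `Γ''`, rooted at `v`. Pulling back along the
contraction inverts this.
-/

open Relation SimpleGraph

theorem Relation.transGen_of_sink {α : Type*} {r s : α → α → Prop} {u a b : α}
    (hu : ∀ c, ¬ s u c) (hsr : ∀ c d, s c d → d ≠ u → r c d) (h : TransGen s a b)
    (hb : b ≠ u) : TransGen r a b := by
  induction h with
  | single hab => exact .single (hsr _ _ hab hb)
  | @tail c d _ hcd ih =>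
    have hc : c ≠ u := by rintro rfl; exact hu _ hcd
    exact (ih hc).tail (hsr _ _ hcd hb)

theorem Relation.not_transGen_or_eq_self {α : Type*} {r : α → α → Prop} {x y : α}
    (hr : ∀ a, ¬ TransGen r a a) (hyx : ¬ ReflTransGen r y x) (a : α) :
    ¬ TransGen (fun c d => r c d ∨ c = x ∧ d = y) a a := by
  have key {a b : α} (h : TransGen (fun c d => r c d ∨ c = x ∧ d = y) a b) :
      TransGen r a b ∨ ReflTransGen r a x ∧ ReflTransGen r y b := by
    induction h with
    | single h => exact h.imp .single fun ⟨hc, hd⟩ => ⟨hc ▸ .refl, hd ▸ .refl⟩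
    | tail _ hcd ih =>
      rcases hcd with hcd | ⟨rfl, rfl⟩
      · exact ih.imp (·.tail hcd) fun ⟨h₁, h₂⟩ => ⟨h₁, h₂.tail hcd⟩
      · exact .inr ⟨ih.elim (·.to_reflTransGen) fun ⟨_, h₂⟩ => absurd h₂ hyx, .refl⟩
  intro h
  rcases key h with h | ⟨h₁, h₂⟩
  exacts [hr a h, hyx (h₂.trans h₁)]

namespace AcyclicOrientation

variable {G : SimpleGraph V}

theorem ext {O O' : AcyclicOrientation G} (h : ∀ a b, O.dir a b ↔ O'.dir a b) : O = O' := by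
  obtain ⟨d, _, _, _⟩ := O
  obtain ⟨d', _, _, _⟩ := O'
  obtain rfl : d = d' := funext₂ fun a b => propext (h a b)
  rfl

theorem asymm (O : AcyclicOrientation G) {a b : V} (h : O.dir a b) : ¬ O.dir b a :=
  fun h' => O.acyclic a (.tail (.single h) h')

theorem dir_of_not_dir (O : AcyclicOrientation G) {a b : V} (hab : G.Adj a b)
    (h : ¬ O.dir b a) : O.dir a b :=
  (O.total hab).resolve_right h

instance [Finite V] : Finite (AcyclicOrientation G) :=
  Finite.of_injective dir fun _ _ h => ext fun a b => by rw [h]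

theorem wellFounded_transGen [Finite V] (O : AcyclicOrientation G) :
    WellFounded (TransGen O.dir) :=
  have : IsTrans V (TransGen O.dir) := ⟨fun _ _ _ => TransGen.trans⟩
  have : Std.Irrefl (TransGen O.dir) := ⟨O.acyclic⟩
  Finite.wellFounded_of_trans_of_irrefl _

theorem not_isIsolated_of_transGen (O : AcyclicOrientation G) {a b : V}
    (h : TransGen O.dir a b) : ¬ G.IsIsolated a := by
  obtain ⟨c, hac, -⟩ := TransGen.head'_iff.1 h
  exact fun hiso => hiso c (O.dir_adj hac)

theorem IsSource.not_transGen {O : AcyclicOrientation G} {a u : V} (hu : O.IsSource u) :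
    ¬ TransGen O.dir a u := by
  intro h
  obtain ⟨c, -, hcu⟩ := TransGen.tail'_iff.1 h
  exact hu c hcu

theorem IsSource.not_reflTransGen {O : AcyclicOrientation G} {a u : V}
    (hu : O.IsSource u) (hau : a ≠ u) : ¬ ReflTransGen O.dir a u := fun h =>
  (reflTransGen_iff_eq_or_transGen.1 h).elim (fun h => hau h.symm) hu.not_transGen

def IsRootedAt (O : AcyclicOrientation G) (q : V) : Prop :=
  ∀ u, O.IsSource u → u = q ∨ G.IsIsolated u

theorem IsRootedAt.isSource [Finite V] {O : AcyclicOrientation G} {q : V}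
    (hO : O.IsRootedAt q) : O.IsSource q := by
  intro a haq
  obtain ⟨m, hma, hmin⟩ :=
    O.wellFounded_transGen.has_min {x | ReflTransGen O.dir x a} ⟨a, .refl⟩
  have hm : O.IsSource m := fun b hbm => hmin b (.head hbm hma) (.single hbm)
  have hmq : TransGen O.dir m q := .tail' hma haq
  rcases hO m hm with rfl | hiso
  · exact O.acyclic m hmq
  · exact O.not_isIsolated_of_transGen hmq hiso

open Classical in
noncomputable def sgn (O : AcyclicOrientation G) (a b : V) : ℤ := if O.dir a b then 1 else -1

theorem sgn_le_one (O : AcyclicOrientation G) (a b : V) : O.sgn a b ≤ 1 := by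
  unfold sgn; split_ifs <;> omega

theorem sgn_of_dir {O : AcyclicOrientation G} {a b : V} (h : O.dir a b) : O.sgn a b = 1 := if_pos h

def IsPotential (O O' : AcyclicOrientation G) (h : V → ℤ) : Prop :=
  ∀ a b, G.Adj a b → O'.sgn a b - O.sgn a b = h b - h a

namespace IsPotential

variable {O O' O'' : AcyclicOrientation G} {h h' : V → ℤ}

theorem refl (O : AcyclicOrientation G) : IsPotential O O 0 := by
  intro a b _
  simp

theorem symm (hp : IsPotential O O' h) : IsPotential O' O (-h) := by
  intro a b hab
  have := hp a b hab
  simp only [Pi.neg_apply]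
  linarith

theorem trans (hp : IsPotential O O' h) (hp' : IsPotential O' O'' h') :
    IsPotential O O'' (h + h') := by
  intro a b hab
  have := hp a b hab
  have := hp' a b hab
  simp only [Pi.add_apply]
  linarith

theorem add_const (hp : IsPotential O O' h) (k : ℤ) : IsPotential O O' (h + fun _ => k) := by
  intro a b hab
  have := hp a b hab
  simp only [Pi.add_apply]
  linarith

theorem sub_eq_of_reachable (hp : IsPotential O O' h) (hp' : IsPotential O O' h') {a b : V}
    (hab : G.Reachable a b) : h b - h' b = h a - h' a := by
  rw [reachable_iff_reflTransGen] at hab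
  induction hab with
  | refl => rfl
  | tail _ hcd ih =>
    have := hp _ _ hcd
    have := hp' _ _ hcd
    linarith

theorem dir_iff_of_eq (hp : IsPotential O O' h) {a b : V} (hab : G.Adj a b) (he : h a = h b) :
    O.dir a b ↔ O'.dir a b := by
  have := hp a b hab
  by_cases h₁ : O.dir a b <;> by_cases h₂ : O'.dir a b <;> simp_all [sgn]

end IsPotential

open Classical in
theorem isPotential_of_clickAt {O O' : AcyclicOrientation G} {u : V} (hc : O.ClickAt u O') :
    IsPotential O O' (Pi.single u 2) := by
  obtain ⟨hu, hO'⟩ := hc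
  intro a b hab
  have := hab.ne
  by_cases ha : a = u
  · subst ha
    have : O.dir a b := O.dir_of_not_dir hab (hu b)
    simp_all [sgn, O.asymm this]
  · by_cases hb : b = u
    · subst hb
      have : O.dir b a := O.dir_of_not_dir hab.symm (hu a)
      simp_all [sgn, O.asymm this]
    · simp_all [sgn]

open Classical in
theorem exists_isPotential_of_eqvGen (q : V) {O O' : AcyclicOrientation G}
    (h : EqvGen IsClick O O') : ∃ h, IsPotential O O' h ∧ h q = 0 := by
  induction h with
  | rel O₁ O₂ hc =>
    obtain ⟨u, hc⟩ := hc
    exact ⟨_, (isPotential_of_clickAt hc).add_const (-(Pi.single u 2 : V → ℤ) q), by simp⟩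
  | refl O₁ => exact ⟨0, .refl O₁, rfl⟩
  | symm O₁ O₂ _ ih =>
    obtain ⟨h, hp, hq⟩ := ih
    exact ⟨-h, hp.symm, by simp [hq]⟩
  | trans O₁ O₂ O₃ _ _ ih₁ ih₂ =>
    obtain ⟨h₁, hp₁, hq₁⟩ := ih₁
    obtain ⟨h₂, hp₂, hq₂⟩ := ih₂
    exact ⟨h₁ + h₂, hp₁.trans hp₂, by simp [hq₁, hq₂]⟩

variable {O O' : AcyclicOrientation G} {h : V → ℤ} {q : V}

theorem IsPotential.le_of_isRootedAt [Finite V] (hO : O.IsRootedAt q) (hp : IsPotential O O' h)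
    {x : V} (hx : ¬ G.IsIsolated x) : h x ≤ h q := by
  let S : Set V := {y | y = q ∨ ¬ G.IsIsolated y}
  obtain ⟨m, hmS, hmax⟩ := S.exists_max_image h S.toFinite ⟨q, .inl rfl⟩
  obtain ⟨u, ⟨huS, hum⟩, humin⟩ :=
    O.wellFounded_transGen.has_min {y | y ∈ S ∧ h y = h m} ⟨m, hmS, rfl⟩
  have hu : O.IsSource u := by
    intro a hau
    have haS : a ∈ S := .inr fun hiso => hiso u (O.dir_adj hau)
    have := hp a u (O.dir_adj hau)
    have := hmax a haS
    have := O'.sgn_le_one a u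
    rw [sgn_of_dir hau] at *
    exact humin a ⟨haS, by omega⟩ (.single hau)
  have huq : u = q := by
    rcases hO u hu with huq | hiso
    · exact huq
    · exact huS.resolve_right (not_not.2 hiso)
  exact huq ▸ hum ▸ hmax x (.inr hx)

theorem eq_of_isPotential [Finite V] (hO : O.IsRootedAt q) (hO' : O'.IsRootedAt q)
    (hp : IsPotential O O' h) : O = O' := by
  have hconst {x : V} (hx : ¬ G.IsIsolated x) : h x = h q := by
    have := hp.le_of_isRootedAt hO hx
    have := hp.symm.le_of_isRootedAt hO' hx
    simp only [Pi.neg_apply] at *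
    omega
  refine ext fun a b => ?_
  by_cases hab : G.Adj a b
  · exact hp.dir_iff_of_eq hab <|
      (hconst fun hiso => hiso b hab).trans (hconst fun hiso => hiso a hab.symm).symm
  · exact iff_of_false (fun h => hab (O.dir_adj h)) (fun h => hab (O'.dir_adj h))

def click (O : AcyclicOrientation G) (u : V) (hu : O.IsSource u) : AcyclicOrientation G where
  dir a b := ((a = u ∨ b = u) ∧ O.dir b a) ∨ (a ≠ u ∧ b ≠ u ∧ O.dir a b)
  dir_adj := by
    rintro a b (⟨-, h⟩ | ⟨-, -, h⟩)
    exacts [(O.dir_adj h).symm, O.dir_adj h]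
  total := by
    intro a b hab
    rcases O.total hab with h | h <;> by_cases ha : a = u <;> by_cases hb : b = u <;>
      simp_all
  acyclic := by
    intro a ha
    have sink (c : V) :
        ¬ (((u = u ∨ c = u) ∧ O.dir c u) ∨ (u ≠ u ∧ c ≠ u ∧ O.dir u c)) := by
      rintro (⟨-, h⟩ | ⟨h, -⟩)
      exacts [hu c h, h rfl]
    have hau : a ≠ u := by
      rintro rfl
      obtain ⟨c, hc, -⟩ := TransGen.head'_iff.1 ha
      exact sink c hc
    refine O.acyclic a (transGen_of_sink sink (fun c d hcd hd => ?_) ha hau)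
    have hc : c ≠ u := by rintro rfl; exact sink d hcd
    rcases hcd with ⟨hcd | hcd, -⟩ | ⟨-, -, hcd⟩
    exacts [absurd hcd hc, absurd hcd hd, hcd]

theorem clickAt_click (O : AcyclicOrientation G) {u : V} (hu : O.IsSource u) :
    O.ClickAt u (O.click u hu) :=
  ⟨hu, fun _ _ => Iff.rfl⟩

theorem exists_eqvGen_isRootedAt [Finite V] (hq : ∀ x, ¬ G.IsIsolated x → G.Reachable q x)
    (O₀ : AcyclicOrientation G) : ∃ O, EqvGen IsClick O₀ O ∧ O.IsRootedAt q := by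
  classical
  let T := {O // EqvGen IsClick O₀ O}
  have : Nonempty T := ⟨⟨O₀, .refl _⟩⟩
  choose pot hpot hpot_q using fun O : T => exists_isPotential_of_eqvGen q O.2
  let S := (Set.toFinite {x : V | ¬ G.IsIsolated x}).toFinset
  obtain ⟨O₁, hmax⟩ := Finite.exists_max fun O : T => ∑ x ∈ S, pot O x
  refine ⟨O₁, O₁.2, fun u hu => or_iff_not_imp_right.2 fun hiso => by_contra fun huq => ?_⟩
  -- clicking the source `u` raises the normalised potential by 2 at `u` and nowhere else
  let O₂ : T :=
    ⟨O₁.1.click u hu, O₁.2.trans _ _ _ (.rel _ _ ⟨u, O₁.1.clickAt_click hu⟩)⟩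
  have hp₂ : IsPotential O₀ O₂ (pot O₁ + Pi.single u 2) :=
    (hpot O₁).trans (isPotential_of_clickAt (O₁.1.clickAt_click hu))
  have heq : ∀ x ∈ S, pot O₂ x = pot O₁ x + (Pi.single u 2 : V → ℤ) x := by
    intro x hx
    have := (hpot O₂).sub_eq_of_reachable hp₂ (hq x (by simpa [S] using hx))
    simp only [Pi.add_apply, hpot_q, Pi.single_apply, Ne.symm huq, if_false] at this ⊢
    linarith
  have := hmax O₂
  rw [Finset.sum_congr rfl heq, Finset.sum_add_distrib, Finset.sum_pi_single',
    if_pos (by simpa [S] using hiso)] at this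
  omega

theorem kappa_eq_card_isRootedAt [Finite V] (hq : ∀ x, ¬ G.IsIsolated x → G.Reachable q x) :
    kappa G = Nat.card {O : AcyclicOrientation G // O.IsRootedAt q} := by
  refine (Nat.card_eq_of_bijective (fun O => Quotient.mk (clickSetoid G) O.1) ⟨?_, ?_⟩).symm
  · rintro ⟨O, hO⟩ ⟨O', hO'⟩ h
    obtain ⟨p, hp, -⟩ := exists_isPotential_of_eqvGen q (Quotient.exact h)
    exact Subtype.ext (eq_of_isPotential hO hO' hp)
  · refine Quotient.ind fun O₀ => ?_
    obtain ⟨O, hO₀O, hO⟩ := exists_eqvGen_isRootedAt hq O₀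
    exact ⟨⟨O, hO⟩, Quotient.sound (.symm _ _ hO₀O)⟩

section Comap

variable {W : Type*} {H : SimpleGraph V} {K : SimpleGraph W}

def comap (O : AcyclicOrientation K) (f : H →g K) : AcyclicOrientation H where
  dir a b := H.Adj a b ∧ O.dir (f a) (f b)
  dir_adj h := h.1
  total hab := (O.total (f.map_adj hab)).imp (⟨hab, ·⟩) (⟨hab.symm, ·⟩)
  acyclic a h := O.acyclic (f a) (TransGen.lift f (fun _ _ h => h.2) _ _ h)

theorem IsSource.comap {O : AcyclicOrientation K} {f : H →g K} {u : V} (hu : O.IsSource (f u)) :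
    (O.comap f).IsSource u :=
  fun a h => hu (f a) h.2

end Comap

section Delete

variable {G : SimpleGraph V} {v w : V}

def extend (O : AcyclicOrientation (G.deleteEdges {s(v, w)})) (hvw : G.Adj v w)
    (hwv : ¬ ReflTransGen O.dir w v) : AcyclicOrientation G where
  dir a b := O.dir a b ∨ a = v ∧ b = w
  dir_adj := by
    rintro a b (h | ⟨rfl, rfl⟩)
    exacts [deleteEdges_le _ (O.dir_adj h), hvw]
  total := by
    intro a b hab
    by_cases he : s(a, b) = s(v, w)
    · rcases Sym2.eq_iff.1 he with ⟨rfl, rfl⟩ | ⟨rfl, rfl⟩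
      exacts [.inl (.inr ⟨rfl, rfl⟩), .inr (.inr ⟨rfl, rfl⟩)]
    · exact (O.total (deleteEdges_adj.2 ⟨hab, he⟩)).imp .inl .inl
  acyclic := not_transGen_or_eq_self O.acyclic hwv

theorem comap_extend (O : AcyclicOrientation (G.deleteEdges {s(v, w)})) (hvw : G.Adj v w)
    (hwv : ¬ ReflTransGen O.dir w v) :
    (O.extend hvw hwv).comap (.ofLE (deleteEdges_le _)) = O := by
  refine ext fun a b => ⟨?_, fun h => ⟨O.dir_adj h, .inl h⟩⟩
  rintro ⟨hab, h | ⟨ha, hb⟩⟩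
  · exact h
  · obtain rfl : a = v := ha
    obtain rfl : b = w := hb
    exact absurd rfl (deleteEdges_adj.1 hab).2

theorem extend_eq_of_comap_eq {O : AcyclicOrientation G}
    {O' : AcyclicOrientation (G.deleteEdges {s(v, w)})}
    (h : O.comap (.ofLE (deleteEdges_le _)) = O') (hvw : O.dir v w)
    {hwv : ¬ ReflTransGen O'.dir w v} : O'.extend (O.dir_adj hvw) hwv = O := by
  subst h
  refine ext fun a b => ⟨?_, fun h => ?_⟩
  · rintro (⟨-, h⟩ | ⟨rfl, rfl⟩)
    exacts [h, hvw]
  · by_cases he : s(a, b) = s(v, w)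
    · rcases Sym2.eq_iff.1 he with ⟨rfl, rfl⟩ | ⟨rfl, rfl⟩
      exacts [.inr ⟨rfl, rfl⟩, absurd h (O.asymm hvw)]
    · exact .inl ⟨deleteEdges_adj.2 ⟨O.dir_adj h, he⟩, h⟩

end Delete

end AcyclicOrientation

section Contract

variable {H : SimpleGraph V} {I : Set V} {c : V}

open Classical in
noncomputable def contractHom (hc : c ∈ I) (hI : H.IsIndepSet I) :
    H →g contractGraph H I c where
  toFun x := if x ∈ I then c else x
  map_rel' {a b} hab := by
    by_cases ha : a ∈ I <;> by_cases hb : b ∈ I <;> simp only [ha, hb, if_true, if_false]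
    · exact absurd hab (hI ha hb hab.ne)
    · exact ⟨fun h => hb (h ▸ hc), .inr (.inl ⟨rfl, hb, a, ha, hab⟩)⟩
    · exact ⟨fun h => ha (h ▸ hc), .inr (.inr ⟨rfl, ha, b, hb, hab.symm⟩)⟩
    · exact ⟨hab.ne, .inl ⟨ha, hb, hab⟩⟩

theorem contractHom_of_mem {hc : c ∈ I} {hI : H.IsIndepSet I} {x : V} (hx : x ∈ I) :
    contractHom hc hI x = c :=
  if_pos hx

theorem contractHom_of_notMem {hc : c ∈ I} {hI : H.IsIndepSet I} {x : V} (hx : x ∉ I) :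
    contractHom hc hI x = x :=
  if_neg hx

theorem isIsolated_contractGraph_of_mem {x : V} (hx : x ∈ I) (hxc : x ≠ c) :
    (contractGraph H I c).IsIsolated x := by
  rintro y ⟨-, ⟨hx', -⟩ | ⟨rfl, -⟩ | ⟨-, hx', -⟩⟩
  exacts [hx' hx, hxc rfl, hx' hx]

theorem isIsolated_contractGraph_iff (hc : c ∈ I) {x : V} (hx : x ∉ I) :
    (contractGraph H I c).IsIsolated x ↔ H.IsIsolated x := by
  refine ⟨fun h y hxy => ?_, fun h y => ?_⟩
  · by_cases hy : y ∈ I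
    · exact h c ⟨fun h => hx (h ▸ hc), .inr (.inr ⟨rfl, hx, y, hy, hxy.symm⟩)⟩
    · exact h y ⟨hxy.ne, .inl ⟨hx, hy, hxy⟩⟩
  · rintro ⟨-, ⟨-, -, hxy⟩ | ⟨rfl, -⟩ | ⟨-, -, z, -, hzx⟩⟩
    exacts [h y hxy, hx hc, h z hzx.symm]

theorem reachable_contractGraph (hc : c ∈ I) (hI : H.IsIndepSet I) (hH : ∀ x, H.Reachable c x)
    {x : V} (hx : ¬ (contractGraph H I c).IsIsolated x) : (contractGraph H I c).Reachable c x := by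
  by_cases hxI : x ∈ I
  · obtain rfl : x = c := by_contra fun hxc => hx (isIsolated_contractGraph_of_mem hxI hxc)
    rfl
  · simpa [contractHom_of_mem hc, contractHom_of_notMem hxI] using (hH x).map (contractHom hc hI)

end Contract

namespace AcyclicOrientation

section Contract

variable {H : SimpleGraph V} {I : Set V} {c : V} {O : AcyclicOrientation H}

theorem not_transGen_of_isAntichain (hO : IsAntichain (TransGen O.dir) I) {x y : V}
    (hx : x ∈ I) (hy : y ∈ I) : ¬ TransGen O.dir x y := by
  rcases eq_or_ne x y with rfl | hxy
  exacts [O.acyclic x, hO hx hy hxy]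

theorem isAntichain_of_isSource (h : ∀ x ∈ I, O.IsSource x) : IsAntichain (TransGen O.dir) I :=
  fun _ _ _ hy _ => (h _ hy).not_transGen

theorem transGen_contractDir {a b : V} (h : TransGen (contractDir O I c) a b) :
    TransGen O.dir a b ∨
      ReflTransGen (contractDir O I c) a c ∧ ReflTransGen (contractDir O I c) c b := by
  induction h with
  | single hab =>
    rcases id hab with ⟨-, -, h⟩ | ⟨rfl, -⟩ | ⟨rfl, -⟩
    · exact .inl (.single h)
    · exact .inr ⟨.refl, .single hab⟩
    · exact .inr ⟨.single hab, .refl⟩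
  | tail had hdb ih =>
    rcases id hdb with ⟨-, -, h⟩ | ⟨rfl, -⟩ | ⟨rfl, -⟩
    · exact ih.imp (·.tail h) fun ⟨h₁, h₂⟩ => ⟨h₁, h₂.tail hdb⟩
    · exact .inr ⟨had.to_reflTransGen, .single hdb⟩
    · exact .inr ⟨had.to_reflTransGen.tail hdb, .refl⟩

theorem not_transGen_contractDir_center (hc : c ∈ I) (hO : IsAntichain (TransGen O.dir) I) :
    ¬ TransGen (contractDir O I c) c c := by
  -- once a directed walk has left `c`, it stays strictly downstream of `I`, hence never returns
  let P (u : V) : Prop := u ∉ I ∧ ∃ x ∈ I, TransGen O.dir x u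
  have hP {a b : V} (ha : P a) (hab : contractDir O I c a b) : P b := by
    obtain ⟨ha, x, hx, hxa⟩ := ha
    rcases hab with ⟨-, hb, h⟩ | ⟨rfl, -⟩ | ⟨rfl, -, y, hy, h⟩
    · exact ⟨hb, x, hx, hxa.tail h⟩
    · exact absurd hc ha
    · exact absurd (hxa.tail h) (not_transGen_of_isAntichain hO hx hy)
  intro h
  obtain ⟨b, hcb, hbc⟩ := TransGen.head'_iff.1 h
  have hb : P b := by
    rcases hcb with ⟨hc', -⟩ | ⟨-, hb, x, hx, h⟩ | ⟨-, hc', -⟩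
    exacts [absurd hc hc', ⟨hb, x, hx, .single h⟩, absurd hc hc']
  have hPc {u : V} (hbu : ReflTransGen (contractDir O I c) b u) : P u := by
    induction hbu with
    | refl => exact hb
    | tail _ h ih => exact hP ih h
  exact (hPc hbc).1 hc

def contract (O : AcyclicOrientation H) (hc : c ∈ I) (hO : IsAntichain (TransGen O.dir) I) :
    AcyclicOrientation (contractGraph H I c) where
  dir := contractDir O I c
  dir_adj := by
    rintro a b (⟨ha, hb, h⟩ | ⟨rfl, hb, x, hx, h⟩ | ⟨rfl, ha, x, hx, h⟩)
    · exact ⟨(O.dir_adj h).ne, .inl ⟨ha, hb, O.dir_adj h⟩⟩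
    · exact ⟨fun h => hb (h ▸ hc), .inr (.inl ⟨rfl, hb, x, hx, O.dir_adj h⟩)⟩
    · exact ⟨fun h => ha (h ▸ hc), .inr (.inr ⟨rfl, ha, x, hx, (O.dir_adj h).symm⟩)⟩
  total := by
    rintro a b ⟨-, ⟨ha, hb, hab⟩ | ⟨rfl, hb, x, hx, hxb⟩ | ⟨rfl, ha, x, hx, hxa⟩⟩
    · exact (O.total hab).imp (.inl ⟨ha, hb, ·⟩) (.inl ⟨hb, ha, ·⟩)
    · exact (O.total hxb).imp (fun h => .inr (.inl ⟨rfl, hb, x, hx, h⟩))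
        (fun h => .inr (.inr ⟨rfl, hb, x, hx, h⟩))
    · exact (O.total hxa).symm.imp (fun h => .inr (.inr ⟨rfl, ha, x, hx, h⟩))
        (fun h => .inr (.inl ⟨rfl, ha, x, hx, h⟩))
  acyclic a h := by
    rcases transGen_contractDir h with h | ⟨h₁, h₂⟩
    · exact O.acyclic a h
    · exact not_transGen_contractDir_center hc hO ((TransGen.trans_right h₂ h).trans_left h₁)

theorem contractDir_contractHom_iff {O : AcyclicOrientation H} (hc : c ∈ I)
    (hI : H.IsIndepSet I) (hO : IsAntichain (TransGen O.dir) I) {a b : V} (hab : H.Adj a b) :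
    contractDir O I c (contractHom hc hI a) (contractHom hc hI b) ↔ O.dir a b := by
  by_cases ha : a ∈ I <;> by_cases hb : b ∈ I
  · exact absurd hab (hI ha hb hab.ne)
  · rw [contractHom_of_mem ha, contractHom_of_notMem hb]
    refine ⟨?_, fun h => .inr (.inl ⟨rfl, hb, a, ha, h⟩)⟩
    rintro (⟨hc', -⟩ | ⟨-, -, x, hx, hxb⟩ | ⟨rfl, -⟩)
    · exact absurd hc hc'
    · exact O.dir_of_not_dir hab fun hba =>
        not_transGen_of_isAntichain hO hx ha (.tail (.single hxb) hba)
    · exact absurd hc hb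
  · rw [contractHom_of_notMem ha, contractHom_of_mem hb]
    refine ⟨?_, fun h => .inr (.inr ⟨rfl, ha, b, hb, h⟩)⟩
    rintro (⟨-, hc', -⟩ | ⟨rfl, -⟩ | ⟨-, -, x, hx, hax⟩)
    · exact absurd hc hc'
    · exact absurd hc ha
    · exact O.dir_of_not_dir hab fun hba =>
        not_transGen_of_isAntichain hO hb hx (.tail (.single hba) hax)
  · rw [contractHom_of_notMem ha, contractHom_of_notMem hb]
    refine ⟨?_, fun h => .inl ⟨ha, hb, h⟩⟩
    rintro (⟨-, -, h⟩ | ⟨rfl, -⟩ | ⟨rfl, -⟩)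
    exacts [h, absurd hc ha, absurd hc hb]

theorem comap_contract (O : AcyclicOrientation H) (hc : c ∈ I) (hI : H.IsIndepSet I)
    (hO : IsAntichain (TransGen O.dir) I) : (O.contract hc hO).comap (contractHom hc hI) = O :=
  ext fun _ _ => ⟨fun ⟨hab, h⟩ => (contractDir_contractHom_iff hc hI hO hab).1 h,
    fun h => ⟨O.dir_adj h, (contractDir_contractHom_iff hc hI hO (O.dir_adj h)).2 h⟩⟩

theorem isAntichain_comap_contractHom (O : AcyclicOrientation (contractGraph H I c))
    (hc : c ∈ I) (hI : H.IsIndepSet I) :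
    IsAntichain (TransGen (O.comap (contractHom hc hI)).dir) I := by
  intro x hx y hy _ h
  have := TransGen.lift (contractHom hc hI) (fun _ _ h => h.2) _ _ h
  rw [Function.onFun, contractHom_of_mem hx, contractHom_of_mem hy] at this
  exact O.acyclic c this

theorem contract_comap (O : AcyclicOrientation (contractGraph H I c)) (hc : c ∈ I)
    (hI : H.IsIndepSet I) :
    (O.comap (contractHom hc hI)).contract hc (isAntichain_comap_contractHom O hc hI) = O := by
  refine ext fun a b => ⟨?_, fun h => ?_⟩
  · rintro (⟨ha, hb, -, h⟩ | ⟨rfl, hb, x, hx, -, h⟩ | ⟨rfl, ha, x, hx, -, h⟩)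
    · rwa [contractHom_of_notMem ha, contractHom_of_notMem hb] at h
    · rwa [contractHom_of_mem hx, contractHom_of_notMem hb] at h
    · rwa [contractHom_of_notMem ha, contractHom_of_mem hx] at h
  · obtain ⟨-, ⟨ha, hb, hab⟩ | ⟨rfl, hb, x, hx, hxb⟩ | ⟨rfl, ha, x, hx, hxa⟩⟩ :=
      O.dir_adj h
    · refine .inl ⟨ha, hb, hab, ?_⟩
      rwa [contractHom_of_notMem ha, contractHom_of_notMem hb]
    · refine .inr (.inl ⟨rfl, hb, x, hx, hxb, ?_⟩)
      rwa [contractHom_of_mem hx, contractHom_of_notMem hb]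
    · refine .inr (.inr ⟨rfl, ha, x, hx, hxa.symm, ?_⟩)
      rwa [contractHom_of_notMem ha, contractHom_of_mem hx]

theorem IsSource.of_contract {O : AcyclicOrientation H} {hc : c ∈ I}
    {hO : IsAntichain (TransGen O.dir) I} {u : V} (hu : (O.contract hc hO).IsSource u)
    (huI : u ∉ I) : O.IsSource u := by
  intro a hau
  by_cases ha : a ∈ I
  · exact hu c (.inr (.inl ⟨rfl, huI, a, ha, hau⟩))
  · exact hu a (.inl ⟨ha, huI, hau⟩)

theorem IsRootedAt.mem_or_isIsolated_of_isSource_comap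
    {O : AcyclicOrientation (contractGraph H I c)} (hO : O.IsRootedAt c) {hc : c ∈ I}
    {hI : H.IsIndepSet I} {u : V} (hu : (O.comap (contractHom hc hI)).IsSource u) :
    u ∈ I ∨ H.IsIsolated u := by
  refine or_iff_not_imp_left.2 fun huI => ?_
  have hu' : O.IsSource u := by
    intro a hau
    obtain ⟨-, ⟨ha, -, hadj⟩ | ⟨rfl, -, x, hx, hadj⟩ | ⟨rfl, -⟩⟩ := O.dir_adj hau
    · exact hu a ⟨hadj, by rwa [contractHom_of_notMem ha, contractHom_of_notMem huI]⟩
    · exact hu x ⟨hadj, by rwa [contractHom_of_mem hx, contractHom_of_notMem huI]⟩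
    · exact huI hc
  rcases hO u hu' with rfl | hiso
  exacts [absurd hc huI, (isIsolated_contractGraph_iff hc huI).1 hiso]

end Contract

end AcyclicOrientation

section DeletionContraction

variable {G : SimpleGraph V} {v w : V}

local notation "Γ'" => G.deleteEdges {s(v, w)}
local notation "Γ''" => contractGraph (G.deleteEdges {s(v, w)}) (insert v (singleton w)) v

theorem isIndepSet_pair_deleteEdges : (Γ').IsIndepSet {v, w} := by
  rintro a (rfl | rfl) b (rfl | rfl) hab h <;> simp_all [deleteEdges_adj, Sym2.eq_swap]

theorem contractGraph_deleteEdges : Γ'' = contractGraph G {v, w} v := by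
  have key {a b : V} (hb : b ∉ ({v, w} : Set V)) : (Γ').Adj a b ↔ G.Adj a b := by
    simp_all [deleteEdges_adj]
  ext a b
  refine and_congr_right fun _ => or_congr (and_congr_right fun _ => and_congr_right key)
    (or_congr ?_ ?_) <;>
  exact and_congr_right fun _ => and_congr_right fun h => exists_congr fun _ =>
    and_congr_right fun _ => key h

theorem SimpleGraph.IsIsolated.of_deleteEdges {u : V} (hu : (Γ').IsIsolated u) (huv : u ≠ v)
    (huw : u ≠ w) : G.IsIsolated u := fun y huy =>
  hu y (deleteEdges_adj.2 ⟨huy, by simp [huv, huw]⟩)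

namespace AcyclicOrientation

theorem IsSource.of_comap_deleteEdges {O : AcyclicOrientation G} {u : V}
    (hu : (O.comap (.ofLE (deleteEdges_le {s(v, w)}))).IsSource u) (huv : u ≠ v) (huw : u ≠ w) :
    O.IsSource u := fun a hau =>
  hu a ⟨deleteEdges_adj.2 ⟨O.dir_adj hau, by simp [huv, huw]⟩, hau⟩

theorem IsRootedAt.comap_deleteEdges {O : AcyclicOrientation G} (hO : O.IsRootedAt v)
    (hw : ¬ (O.comap (.ofLE (deleteEdges_le {s(v, w)}))).IsSource w) :
    (O.comap (.ofLE (deleteEdges_le {s(v, w)}))).IsRootedAt v := by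
  intro u hu
  by_cases huv : u = v
  · exact .inl huv
  have huw : u ≠ w := by rintro rfl; exact hw hu
  exact (hO u (hu.of_comap_deleteEdges huv huw)).imp_right fun h y hy => h y (deleteEdges_le _ hy)

theorem IsRootedAt.dir [Finite V] {O : AcyclicOrientation G} (hO : O.IsRootedAt v)
    (hvw : G.Adj v w) : O.dir v w :=
  O.dir_of_not_dir hvw (hO.isSource w)

theorem IsRootedAt.isSource_comap_contractHom [Finite V] {H : SimpleGraph V} {I : Set V} {c : V}
    {O : AcyclicOrientation (contractGraph H I c)} (hO : O.IsRootedAt c) {hc : c ∈ I}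
    {hI : H.IsIndepSet I} {x : V} (hx : x ∈ I) : (O.comap (contractHom hc hI)).IsSource x :=
  IsSource.comap (by rw [contractHom_of_mem hx]; exact hO.isSource)

theorem isAntichain_comap_deleteEdges [Finite V] {O : AcyclicOrientation G} (hO : O.IsRootedAt v)
    (hw : (O.comap (.ofLE (deleteEdges_le {s(v, w)}))).IsSource w) :
    IsAntichain (TransGen (O.comap (.ofLE (deleteEdges_le {s(v, w)}))).dir) {v, w} :=
  isAntichain_of_isSource (by rintro x (rfl | rfl); exacts [hO.isSource.comap, hw])

theorem IsRootedAt.contract_comap_deleteEdges [Finite V] (hvw : G.Adj v w)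
    {O : AcyclicOrientation G} (hO : O.IsRootedAt v)
    (hw : (O.comap (.ofLE (deleteEdges_le {s(v, w)}))).IsSource w) :
    ((O.comap (.ofLE (deleteEdges_le {s(v, w)}))).contract (Set.mem_insert v {w})
      (isAntichain_comap_deleteEdges hO hw)).IsRootedAt v := by
  intro u hu
  by_cases huv : u = v
  · exact .inl huv
  by_cases huw : u = w
  · subst huw
    exact .inr (isIsolated_contractGraph_of_mem (by simp) hvw.ne.symm)
  have huI : u ∉ ({v, w} : Set V) := by simp [huv, huw]
  refine .inr ((isIsolated_contractGraph_iff (Set.mem_insert v {w}) huI).2 fun y hy => ?_)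
  exact (hO u ((hu.of_contract huI).of_comap_deleteEdges huv huw)).resolve_left huv y
    (deleteEdges_le _ hy)

theorem isRootedAt_extend {O : AcyclicOrientation (Γ')} (hvw : G.Adj v w)
    (hwv : ¬ ReflTransGen O.dir w v)
    (hO : ∀ u, O.IsSource u → u = v ∨ u = w ∨ (Γ').IsIsolated u) :
    (O.extend hvw hwv).IsRootedAt v := by
  intro u hu
  have huw : u ≠ w := by rintro rfl; exact hu v (.inr ⟨rfl, rfl⟩)
  rcases hO u fun a h => hu a (.inl h) with huv | huw' | hiso
  · exact .inl huv
  · exact absurd huw' huw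
  · by_cases huv : u = v
    exacts [.inl huv, .inr (IsIsolated.of_deleteEdges hiso huv huw)]

noncomputable def rootedDeleteEquiv [Finite V] (hvw : G.Adj v w) (hw : ¬ (Γ').IsIsolated w) :
    {O : {O : AcyclicOrientation G // O.IsRootedAt v} //
        ¬ (O.1.comap (.ofLE (deleteEdges_le {s(v, w)}))).IsSource w} ≃
      {O : AcyclicOrientation (Γ') // O.IsRootedAt v} where
  toFun O := ⟨_, O.1.2.comap_deleteEdges O.2⟩
  invFun O :=
    ⟨⟨O.1.extend hvw (O.2.isSource.not_reflTransGen hvw.ne.symm),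
        isRootedAt_extend hvw _ fun u hu => (O.2 u hu).imp_right .inr⟩,
      by rw [comap_extend]; exact fun h => (O.2 w h).elim hvw.ne.symm hw⟩
  left_inv O := by
    ext : 2
    dsimp only
    exact extend_eq_of_comap_eq rfl (O.1.2.dir hvw)
  right_inv O := by
    ext : 1
    dsimp only
    exact comap_extend _ _ _

noncomputable def rootedContractEquiv [Finite V] (hvw : G.Adj v w) :
    {O : {O : AcyclicOrientation G // O.IsRootedAt v} //
        (O.1.comap (.ofLE (deleteEdges_le {s(v, w)}))).IsSource w} ≃
      {O : AcyclicOrientation (Γ'') // O.IsRootedAt v} where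
  toFun O := ⟨_, O.1.2.contract_comap_deleteEdges hvw O.2⟩
  invFun O :=
    ⟨⟨(O.1.comap (contractHom (Set.mem_insert v {w}) isIndepSet_pair_deleteEdges)).extend hvw
        ((O.2.isSource_comap_contractHom (Set.mem_insert v {w})).not_reflTransGen hvw.ne.symm),
        isRootedAt_extend hvw _ fun u hu => by
          simpa [or_assoc] using O.2.mem_or_isIsolated_of_isSource_comap hu⟩,
      by rw [comap_extend]; exact O.2.isSource_comap_contractHom (by simp)⟩
  left_inv O := by
    ext : 2
    dsimp only
    exact extend_eq_of_comap_eq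
      (comap_contract _ _ _ (isAntichain_comap_deleteEdges O.1.2 O.2)).symm (O.1.2.dir hvw)
  right_inv O := by
    ext : 1
    dsimp only
    simp only [comap_extend]
    exact contract_comap _ _ _

theorem card_isRootedAt_eq_add [Finite V] (hvw : G.Adj v w) (hw : ¬ (Γ').IsIsolated w) :
    Nat.card {O : AcyclicOrientation G // O.IsRootedAt v} =
      Nat.card {O : AcyclicOrientation (Γ') // O.IsRootedAt v} +
        Nat.card {O : AcyclicOrientation (Γ'') // O.IsRootedAt v} := by
  classical
  rw [← Nat.card_sum]
  exact Nat.card_congr <| (Equiv.sumCompl _).symm.trans <| (Equiv.sumComm _ _).trans <|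
    (rootedDeleteEquiv hvw hw).sumCongr (rootedContractEquiv hvw)

end AcyclicOrientation

end DeletionContraction

theorem kappa_deletion_contraction_general [Fintype V] (G : SimpleGraph V)
    (hconn : G.Connected) (v w : V) (hvw : G.Adj v w)
    (hcyc : (G.deleteEdges {s(v,w)}).Reachable v w) :
    kappa G = kappa (G.deleteEdges {s(v,w)}) + kappa (contractGraph G {v, w} v) := by
  have hconn' : (G.deleteEdges {s(v, w)}).Connected :=
    hconn.connected_delete_edge_of_not_isBridge (by rwa [isBridge_iff, not_not])
  have : Nontrivial V := ⟨v, w, hvw.ne⟩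
  rw [← contractGraph_deleteEdges, kappa_eq_card_isRootedAt fun x _ => hconn.preconnected v x,
    kappa_eq_card_isRootedAt fun x _ => hconn'.preconnected v x,
    kappa_eq_card_isRootedAt fun x => reachable_contractGraph (Set.mem_insert v {w})
      isIndepSet_pair_deleteEdges (hconn'.preconnected v)]
  exact card_isRootedAt_eq_add hvw (hconn'.preconnected.not_isIsolated w)

/-- Deletion–contraction recursion for `κ` at a cycle-edge. -/
theorem kappa_deletion_contraction [Fintype V] [DecidableEq V] (G : SimpleGraph V)
    (hconn : G.Connected) (v w : V) (hvw : G.Adj v w)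
    (hcyc : (G.deleteEdges {s(v,w)}).Reachable v w) :
    kappa G = kappa (G.deleteEdges {s(v,w)}) + kappa (contractGraph G {v, w} v) :=
  kappa_deletion_contraction_general G hconn v w hvw hcyc
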